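/- arXiv:math/0111310 — 4 statements merged into one kernel-verified Lean document; each statement's English description precedes it below -/
import Mathlib

section
/- For every index i ∈ {1,…,N} there exists a unique ℂ-linear map ∂_i : B → B such that ∂_i(1) = 0 and ∂_i(e_j·x) = δ_{ij}·x + q_{ij}·e_j·∂_i(x) for every j ∈ {1,…,N} and every x ∈ B. -/
/-- For every index `i` there exists a unique `ℂ`-linear map
`∂ᵢ : B → B` with `∂ᵢ 1 = 0` and `∂ᵢ (eⱼ x) = δᵢⱼ x + qᵢⱼ eⱼ ∂ᵢ x` for all `j, x`,
where `B = FreeAlgebra ℂ (Fin N)`. -/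
theorem stmt0 (N : ℕ) (hN : 1 ≤ N) (q : Fin N → Fin N → ℂ)
    (hq : ∀ i j, q i j ≠ 0) (i : Fin N) :
    ∃! D : FreeAlgebra ℂ (Fin N) →ₗ[ℂ] FreeAlgebra ℂ (Fin N),
      D 1 = 0 ∧
      ∀ (j : Fin N) (x : FreeAlgebra ℂ (Fin N)),
        D (FreeAlgebra.ι ℂ j * x) =
          (if i = j then x else 0) + q i j • (FreeAlgebra.ι ℂ j * D x) := by
  classical
  let T : Fin N → Module.End ℂ ((FreeAlgebra ℂ (Fin N)) × (FreeAlgebra ℂ (Fin N))) := fun j =>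
    LinearMap.prod
      (LinearMap.mulLeft ℂ (FreeAlgebra.ι ℂ j) ∘ₗ LinearMap.fst ℂ (FreeAlgebra ℂ (Fin N)) (FreeAlgebra ℂ (Fin N)))
      ((if i = j then LinearMap.fst ℂ (FreeAlgebra ℂ (Fin N)) (FreeAlgebra ℂ (Fin N)) else 0) +
        q i j • (LinearMap.mulLeft ℂ (FreeAlgebra.ι ℂ j) ∘ₗ LinearMap.snd ℂ (FreeAlgebra ℂ (Fin N)) (FreeAlgebra ℂ (Fin N))))
  let φ : FreeAlgebra ℂ (Fin N) →ₐ[ℂ] Module.End ℂ ((FreeAlgebra ℂ (Fin N)) × (FreeAlgebra ℂ (Fin N))) := FreeAlgebra.lift ℂ T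
  have hφι : ∀ (j : Fin N) (p : (FreeAlgebra ℂ (Fin N)) × (FreeAlgebra ℂ (Fin N))),
      φ (FreeAlgebra.ι ℂ j) p =
        (FreeAlgebra.ι ℂ j * p.1,
          (if i = j then p.1 else 0) + q i j • (FreeAlgebra.ι ℂ j * p.2)) := by
    intro j p
    by_cases h : i = j <;>
      simp [φ, T, FreeAlgebra.lift_ι_apply, h, Pi.prod]
  have hfst : ∀ (x : FreeAlgebra ℂ (Fin N)) (p : (FreeAlgebra ℂ (Fin N)) × (FreeAlgebra ℂ (Fin N))), (φ x p).1 = x * p.1 := by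
    intro x
    induction x with
    | grade0 r =>
        intro p
        simp [Algebra.algebraMap_eq_smul_one, Algebra.smul_mul_assoc]
    | grade1 j => intro p; rw [hφι]
    | mul a b ha hb =>
        intro p
        rw [map_mul]
        simp only [Module.End.mul_apply]
        rw [ha, hb, mul_assoc]
    | add a b ha hb =>
        intro p
        rw [map_add]
        simp only [LinearMap.add_apply, Prod.fst_add, ha, hb, add_mul]
  let D : FreeAlgebra ℂ (Fin N) →ₗ[ℂ] FreeAlgebra ℂ (Fin N) :=
    { toFun := fun x => (φ x (1, 0)).2
      map_add' := by intro x y; simp [map_add]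
      map_smul' := by intro c x; simp [map_smul]
      }
  have hD1 : D 1 = 0 := by simp [D]
  have hDrec : ∀ (j : Fin N) (x : FreeAlgebra ℂ (Fin N)),
      D (FreeAlgebra.ι ℂ j * x) =
        (if i = j then x else 0) + q i j • (FreeAlgebra.ι ℂ j * D x) := by
    intro j x
    show (φ (FreeAlgebra.ι ℂ j * x) (1, 0)).2 = _
    rw [map_mul]
    simp only [Module.End.mul_apply]
    rw [hφι]
    simp only [hfst, mul_one]
    rfl
  refine ⟨D, ⟨hD1, hDrec⟩, ?_⟩
  rintro D' ⟨hD'1, hD'rec⟩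
  ext x
  suffices h : (D' x = D x) ∧
      ∀ y : FreeAlgebra ℂ (Fin N), D' y = D y → D' (x * y) = D (x * y) from h.1
  induction x with
  | grade0 r =>
      constructor
      · rw [Algebra.algebraMap_eq_smul_one, map_smul, map_smul, hD1, hD'1]
      · intro y hy
        rw [Algebra.algebraMap_eq_smul_one, smul_mul_assoc, one_mul, map_smul, map_smul, hy]
  | grade1 j =>
      constructor
      · have h1 := hD'rec j 1
        have h2 := hDrec j 1
        rw [mul_one] at h1 h2
        rw [h1, h2, hD1, hD'1]
      · intro y hy
        rw [hD'rec, hDrec, hy]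
  | mul a b ha hb =>
      constructor
      · rw [ha.2 b hb.1]
      · intro y hy
        rw [mul_assoc, ha.2 (b * y) (hb.2 y hy), ← mul_assoc]
  | add a b ha hb =>
      constructor
      · rw [map_add, map_add, ha.1, hb.1]
      · intro y hy
        rw [add_mul, map_add, map_add, ha.2 y hy, hb.2 y hy]
end

section
/- For every natural number n ≥ 2, the identity ∑_{k=2}^{n} k·(k−1)·(n+1−k)!·(k−2)!·C(n,k) = C(n,2)·n! holds, where C(n,k) denotes the binomial coefficient. -/
lemma subsum : ∀ n : ℕ, ∑ k ∈ Finset.Icc 2 n, (n + 1 - k) = n.choose 2 := by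
  intro n
  induction n with
  | zero => simp
  | succ n ih =>
    rcases Nat.lt_or_ge n 1 with h | h
    · interval_cases n <;> simp
    · rw [Finset.sum_Icc_succ_top (by omega : 2 ≤ n + 1)]
      have h1 : ∑ k ∈ Finset.Icc 2 n, (n + 1 + 1 - k) =
          ∑ k ∈ Finset.Icc 2 n, ((n + 1 - k) + 1) := by
        refine Finset.sum_congr rfl fun k hk => ?_
        simp only [Finset.mem_Icc] at hk
        omega
      rw [h1, Finset.sum_add_distrib, ih, Finset.sum_const, Nat.card_Icc, smul_eq_mul]
      have h2 : (n + 1).choose 2 = n.choose 1 + n.choose 2 := Nat.choose_succ_succ n 1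
      simp only [Nat.choose_one_right] at h2
      omega

/-- For every `n ≥ 2`,
`∑_{k=2}^{n} k (k−1) (n+1−k)! (k−2)! C(n,k) = C(n,2) n!`. -/
theorem stmt7 (n : ℕ) (hn : 2 ≤ n) :
    ∑ k ∈ Finset.Icc 2 n,
        k * (k - 1) * Nat.factorial (n + 1 - k) * Nat.factorial (k - 2) * n.choose k =
      n.choose 2 * Nat.factorial n := by
  have hterm : ∀ k ∈ Finset.Icc 2 n,
      k * (k - 1) * Nat.factorial (n + 1 - k) * Nat.factorial (k - 2) * n.choose k
        = (n + 1 - k) * Nat.factorial n := by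
    intro k hk
    simp only [Finset.mem_Icc] at hk
    obtain ⟨h2, hkn⟩ := hk
    obtain ⟨m, rfl⟩ : ∃ m, k = m + 2 := ⟨k - 2, by omega⟩
    obtain ⟨d, rfl⟩ : ∃ d, n = m + 2 + d := ⟨n - (m + 2), by omega⟩
    have hch := Nat.choose_mul_factorial_mul_factorial (show m + 2 ≤ m + 2 + d by omega)
    have h3 : m + 2 + d - (m + 2) = d := by omega
    have h4 : m + 2 + d + 1 - (m + 2) = d + 1 := by omega
    rw [h3] at hch
    rw [h4]
    simp only [Nat.add_sub_cancel, show m + 2 - 1 = m + 1 by omega]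
    calc (m + 2) * (m + 1) * (d + 1).factorial * m.factorial * (m + 2 + d).choose (m + 2)
        = (d + 1) * ((m + 2 + d).choose (m + 2) * ((m + 2) * ((m + 1) * m.factorial)) * d.factorial) := by
          rw [Nat.factorial_succ]; ring
      _ = (d + 1) * ((m + 2 + d).choose (m + 2) * (m + 2).factorial * d.factorial) := by
          rw [Nat.factorial_succ, Nat.factorial_succ]
      _ = (d + 1) * (m + 2 + d).factorial := by rw [hch]
  rw [Finset.sum_congr rfl hterm, ← Finset.sum_mul, subsum, Nat.mul_comm]
end

section
/- For every natural number n ≥ 2, the identity 2·∑_{k=2}^{n} (n+1−k)!·(k−2)!·C(n−2,k−2) = n! holds, where C(n−2,k−2) denotes the binomial coefficient. -/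
lemma gauss_aux : ∀ n : ℕ, 2 ≤ n → 2 * ∑ k ∈ Finset.Icc 2 n, (n + 1 - k) = n * (n - 1) := by
  intro n hn
  induction n, hn using Nat.le_induction with
  | base => decide
  | succ n hn ih =>
    rw [Finset.sum_Icc_succ_top (by omega : 2 ≤ n + 1)]
    have hcongr : ∑ k ∈ Finset.Icc 2 n, (n + 1 + 1 - k) =
        ∑ k ∈ Finset.Icc 2 n, ((n + 1 - k) + 1) := by
      apply Finset.sum_congr rfl
      intro k hk
      simp only [Finset.mem_Icc] at hk
      omega
    rw [hcongr, Finset.sum_add_distrib, Finset.sum_const, Nat.card_Icc, smul_eq_mul]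
    obtain ⟨m, rfl⟩ : ∃ m, n = m + 2 := ⟨n - 2, by omega⟩
    have h1 : m + 2 + 1 - 2 = m + 1 := by omega
    have h2 : m + 2 + 1 + 1 - (m + 2 + 1) = 1 := by omega
    rw [h1, h2]
    have h3 : 2 * (∑ k ∈ Finset.Icc 2 (m + 2), (m + 2 + 1 - k) + (m + 1) * 1 + 1) =
        2 * ∑ k ∈ Finset.Icc 2 (m + 2), (m + 2 + 1 - k) + 2 * (m + 1) + 2 := by ring
    rw [h3, ih]
    have h4 : m + 2 - 1 = m + 1 := by omega
    have h5 : m + 2 + 1 - 1 = m + 2 := by omega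
    rw [h4, h5]
    ring

/-- For every `n ≥ 2`,
`2 ∑_{k=2}^{n} (n+1−k)! (k−2)! C(n−2,k−2) = n!`. -/
theorem stmt8 (n : ℕ) (hn : 2 ≤ n) :
    2 * ∑ k ∈ Finset.Icc 2 n,
        Nat.factorial (n + 1 - k) * Nat.factorial (k - 2) * (n - 2).choose (k - 2) =
      Nat.factorial n := by
  have hsum : ∑ k ∈ Finset.Icc 2 n,
      Nat.factorial (n + 1 - k) * Nat.factorial (k - 2) * (n - 2).choose (k - 2) =
      ∑ k ∈ Finset.Icc 2 n, (n + 1 - k) * Nat.factorial (n - 2) := by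
    apply Finset.sum_congr rfl
    intro k hk
    simp only [Finset.mem_Icc] at hk
    obtain ⟨h2, hkn⟩ := hk
    have hc : (n - 2).choose (k - 2) * Nat.factorial (k - 2) *
        Nat.factorial (n - 2 - (k - 2)) = Nat.factorial (n - 2) :=
      Nat.choose_mul_factorial_mul_factorial (by omega)
    have h1 : n - 2 - (k - 2) = n - k := by omega
    rw [h1] at hc
    have h2' : n + 1 - k = (n - k) + 1 := by omega
    rw [h2', Nat.factorial_succ]
    calc (n - k + 1) * Nat.factorial (n - k) * Nat.factorial (k - 2) * (n - 2).choose (k - 2)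
        = (n - k + 1) * ((n - 2).choose (k - 2) * Nat.factorial (k - 2) *
            Nat.factorial (n - k)) := by ring
      _ = (n - k + 1) * Nat.factorial (n - 2) := by rw [hc]
  rw [hsum, ← Finset.sum_mul, ← Nat.mul_assoc, gauss_aux n hn]
  have : n * (n - 1) * Nat.factorial (n - 2) = Nat.factorial n := by
    obtain ⟨m, rfl⟩ : ∃ m, n = m + 2 := ⟨n - 2, by omega⟩
    simp [Nat.factorial_succ]
    ring
  exact this
end

section
/- Let N ≥ 1 and let p, p̄ : {1,…,N}² → ℂ be systems of nonzero parameters satisfying p_{ij}·p̄_{ji} = 1 for all i,j. Let A be the quotient of the free associative unital ℂ-algebra on the 4N generators {K_i, K̄_i, e_i, f_i : 1 ≤ i ≤ N} by the two-sided ideal generated by the elements: K_iK_j − K_jK_i, K̄_iK̄_j − K̄_jK̄_i, K_iK̄_j − K̄_jK_i (all i,j); K_ie_j − p_{ij}·e_jK_i, K̄_ie_j − p̄_{ij}·e_jK̄_i, K_if_j − p_{ij}^{-1}·f_jK_i, K̄_if_j − p̄_{ij}^{-1}·f_jK̄_i (all i,j); and e_if_j − f_je_i − δ_{ij}(K_i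 − K̄_i) (all i,j). Then: (1) there exists a unique ℂ-algebra homomorphism Δ : A → A ⊗_ℂ A with Δ(K_i) = K_i⊗K_i, Δ(K̄_i) = K̄_i⊗K̄_i, Δ(e_i) = 1⊗e_i + e_i⊗K_i, Δ(f_i) = K̄_i⊗f_i + f_i⊗1; (2) there exists a unique ℂ-algebra homomorphism ε : A → ℂ with ε(K_i) = ε(K̄_i) = 1 and ε(e_i) = ε(f_i) = 0; (3) Δ is coassociative, i.e., (Δ⊗id)∘Δ = (id⊗Δ)∘Δ, and ε is a counit for Δ, i.e., (ε⊗id)∘Δ = id = (id⊗ε)∘Δ under the canonical identifications ℂ⊗A ≅ A ≅ A⊗ℂ. -/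
/-!
`A` is presented by generators and relations, so an algebra map out of `A` is the same as an
assignment on the generators that satisfies the relations, and two algebra maps agreeing on the
generators are equal. This gives existence and uniqueness of `Δ` and `ε` once the relations are
checked on the proposed images. The only non-trivial check is `e_i f_j - f_j e_i`, where the cross
terms `e_i K̄_j ⊗ K_i f_j` and `K̄_j e_i ⊗ f_j K_i` agree precisely because `p_{ij} p̄_{ji} = 1`.
Coassociativity and the counit laws are equalities of algebra maps out of `A`, so they too need
only be checked on the generators.
-/

noncomputable section

open scoped TensorProduct

/-- Generators `K_i, K̄_i, e_i, f_i` of the generalized Drinfel'd–Jimbo algebra. -/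
inductive DJGen (N : ℕ) : Type
  | K : Fin N → DJGen N
  | Kb : Fin N → DJGen N
  | e : Fin N → DJGen N
  | f : Fin N → DJGen N

/-- The image of a generator in the free algebra. -/
def g {N : ℕ} (x : DJGen N) : FreeAlgebra ℂ (DJGen N) := FreeAlgebra.ι ℂ x

/-- The defining relations of the generalized Drinfel'd–Jimbo algebra: identifying the
two sides of each relation generates exactly the two-sided ideal generated by the listed
differences. -/
inductive djRel (N : ℕ) (p pb : Fin N → Fin N → ℂ) :
    FreeAlgebra ℂ (DJGen N) → FreeAlgebra ℂ (DJGen N) → Prop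
  | KK (i j : Fin N) : djRel N p pb (g (.K i) * g (.K j)) (g (.K j) * g (.K i))
  | KbKb (i j : Fin N) : djRel N p pb (g (.Kb i) * g (.Kb j)) (g (.Kb j) * g (.Kb i))
  | KKb (i j : Fin N) : djRel N p pb (g (.K i) * g (.Kb j)) (g (.Kb j) * g (.K i))
  | Ke (i j : Fin N) : djRel N p pb (g (.K i) * g (.e j)) (p i j • (g (.e j) * g (.K i)))
  | Kbe (i j : Fin N) : djRel N p pb (g (.Kb i) * g (.e j)) (pb i j • (g (.e j) * g (.Kb i)))
  | Kf (i j : Fin N) : djRel N p pb (g (.K i) * g (.f j)) ((p i j)⁻¹ • (g (.f j) * g (.K i)))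
  | Kbf (i j : Fin N) : djRel N p pb (g (.Kb i) * g (.f j)) ((pb i j)⁻¹ • (g (.f j) * g (.Kb i)))
  | ef (i j : Fin N) : djRel N p pb (g (.e i) * g (.f j) - g (.f j) * g (.e i))
      (if i = j then g (.K i) - g (.Kb i) else 0)

/-- The generalized Drinfel'd–Jimbo algebra `A`: the quotient of the free algebra on the
`4N` generators by the two-sided ideal generated by the relations. -/
abbrev DJAlg (N : ℕ) (p pb : Fin N → Fin N → ℂ) : Type := RingQuot (djRel N p pb)

/-- The image of a generator in `A`. -/
def gen {N : ℕ} (p pb : Fin N → Fin N → ℂ) (x : DJGen N) : DJAlg N p pb :=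
  RingQuot.mkAlgHom ℂ (djRel N p pb) (g x)

/-- `Δ` takes the prescribed values on the generators. -/
def IsComul {N : ℕ} (p pb : Fin N → Fin N → ℂ)
    (Δ : DJAlg N p pb →ₐ[ℂ] DJAlg N p pb ⊗[ℂ] DJAlg N p pb) : Prop :=
  (∀ i, Δ (gen p pb (.K i)) = gen p pb (.K i) ⊗ₜ[ℂ] gen p pb (.K i)) ∧
  (∀ i, Δ (gen p pb (.Kb i)) = gen p pb (.Kb i) ⊗ₜ[ℂ] gen p pb (.Kb i)) ∧
  (∀ i, Δ (gen p pb (.e i)) = 1 ⊗ₜ[ℂ] gen p pb (.e i) + gen p pb (.e i) ⊗ₜ[ℂ] gen p pb (.K i)) ∧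
  (∀ i, Δ (gen p pb (.f i)) = gen p pb (.Kb i) ⊗ₜ[ℂ] gen p pb (.f i) + gen p pb (.f i) ⊗ₜ[ℂ] 1)

/-- `ε` takes the prescribed values on the generators. -/
def IsCounit {N : ℕ} (p pb : Fin N → Fin N → ℂ) (ε : DJAlg N p pb →ₐ[ℂ] ℂ) : Prop :=
  (∀ i, ε (gen p pb (.K i)) = 1) ∧ (∀ i, ε (gen p pb (.Kb i)) = 1) ∧
  (∀ i, ε (gen p pb (.e i)) = 0) ∧ (∀ i, ε (gen p pb (.f i)) = 0)

namespace DJAlg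

variable {N : ℕ} {p pb : Fin N → Fin N → ℂ}

section Presentation

variable (p pb)

lemma gen_mul_gen (x y : DJGen N) :
    gen p pb x * gen p pb y = RingQuot.mkAlgHom ℂ (djRel N p pb) (g x * g y) := by
  simp only [gen, map_mul]

lemma K_comm (i j : Fin N) :
    gen p pb (.K i) * gen p pb (.K j) = gen p pb (.K j) * gen p pb (.K i) := by
  rw [gen_mul_gen, gen_mul_gen]
  exact RingQuot.mkAlgHom_rel ℂ (djRel.KK i j)

lemma Kb_comm (i j : Fin N) :
    gen p pb (.Kb i) * gen p pb (.Kb j) = gen p pb (.Kb j) * gen p pb (.Kb i) := by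
  rw [gen_mul_gen, gen_mul_gen]
  exact RingQuot.mkAlgHom_rel ℂ (djRel.KbKb i j)

lemma K_Kb_comm (i j : Fin N) :
    gen p pb (.K i) * gen p pb (.Kb j) = gen p pb (.Kb j) * gen p pb (.K i) := by
  rw [gen_mul_gen, gen_mul_gen]
  exact RingQuot.mkAlgHom_rel ℂ (djRel.KKb i j)

lemma K_mul_e (i j : Fin N) :
    gen p pb (.K i) * gen p pb (.e j) = p i j • (gen p pb (.e j) * gen p pb (.K i)) := by
  rw [gen_mul_gen, gen_mul_gen, ← map_smul]
  exact RingQuot.mkAlgHom_rel ℂ (djRel.Ke i j)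

lemma Kb_mul_e (i j : Fin N) :
    gen p pb (.Kb i) * gen p pb (.e j) = pb i j • (gen p pb (.e j) * gen p pb (.Kb i)) := by
  rw [gen_mul_gen, gen_mul_gen, ← map_smul]
  exact RingQuot.mkAlgHom_rel ℂ (djRel.Kbe i j)

lemma K_mul_f (i j : Fin N) :
    gen p pb (.K i) * gen p pb (.f j) = (p i j)⁻¹ • (gen p pb (.f j) * gen p pb (.K i)) := by
  rw [gen_mul_gen, gen_mul_gen, ← map_smul]
  exact RingQuot.mkAlgHom_rel ℂ (djRel.Kf i j)

lemma Kb_mul_f (i j : Fin N) :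
    gen p pb (.Kb i) * gen p pb (.f j) = (pb i j)⁻¹ • (gen p pb (.f j) * gen p pb (.Kb i)) := by
  rw [gen_mul_gen, gen_mul_gen, ← map_smul]
  exact RingQuot.mkAlgHom_rel ℂ (djRel.Kbf i j)

lemma e_mul_f_sub_f_mul_e (i j : Fin N) :
    gen p pb (.e i) * gen p pb (.f j) - gen p pb (.f j) * gen p pb (.e i) =
      if i = j then gen p pb (.K i) - gen p pb (.Kb i) else 0 := by
  rw [gen_mul_gen, gen_mul_gen, ← map_sub, RingQuot.mkAlgHom_rel ℂ (djRel.ef i j)]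
  split_ifs <;> simp only [map_sub, map_zero, gen]

end Presentation

lemma algHom_ext {B : Type*} [Semiring B] [Algebra ℂ B] {φ ψ : DJAlg N p pb →ₐ[ℂ] B}
    (h : ∀ x, φ (gen p pb x) = ψ (gen p pb x)) : φ = ψ :=
  RingQuot.ringQuot_ext' ℂ _ _ (FreeAlgebra.hom_ext (funext h))

section Lift

variable {B : Type*} [Semiring B] [Algebra ℂ B] (v : DJGen N → B)
  (hv : ∀ ⦃a b⦄, djRel N p pb a b → FreeAlgebra.lift ℂ v a = FreeAlgebra.lift ℂ v b)

@[simp]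
lemma freeAlgebra_lift_g (x : DJGen N) : FreeAlgebra.lift ℂ v (g x) = v x :=
  FreeAlgebra.lift_ι_apply v x

include hv in
lemma existsUnique_algHom_gen : ∃! φ : DJAlg N p pb →ₐ[ℂ] B, ∀ x, φ (gen p pb x) = v x := by
  refine ⟨RingQuot.liftAlgHom ℂ ⟨FreeAlgebra.lift ℂ v, hv⟩, fun x => ?_,
    fun ψ hψ => algHom_ext fun x => ?_⟩
  · rw [gen, RingQuot.liftAlgHom_mkAlgHom_apply, freeAlgebra_lift_g]
  · rw [hψ, gen, RingQuot.liftAlgHom_mkAlgHom_apply, freeAlgebra_lift_g]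

end Lift

variable (p pb) in
def comulGen : DJGen N → DJAlg N p pb ⊗[ℂ] DJAlg N p pb
  | .K i => gen p pb (.K i) ⊗ₜ gen p pb (.K i)
  | .Kb i => gen p pb (.Kb i) ⊗ₜ gen p pb (.Kb i)
  | .e i => 1 ⊗ₜ gen p pb (.e i) + gen p pb (.e i) ⊗ₜ gen p pb (.K i)
  | .f i => gen p pb (.Kb i) ⊗ₜ gen p pb (.f i) + gen p pb (.f i) ⊗ₜ 1

lemma isComul_iff {Δ : DJAlg N p pb →ₐ[ℂ] DJAlg N p pb ⊗[ℂ] DJAlg N p pb} :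
    IsComul p pb Δ ↔ ∀ x, Δ (gen p pb x) = comulGen p pb x := by
  refine ⟨fun ⟨hK, hKb, he, hf⟩ x => ?_, fun h => ⟨fun i => h _, fun i => h _, fun i => h _,
    fun i => h _⟩⟩
  cases x <;> simp only [comulGen, hK, hKb, he, hf]

lemma e_mul_Kb_tmul_K_mul_f (hcomp : ∀ i j, p i j * pb j i = 1) (i j : Fin N) :
    (gen p pb (.e i) * gen p pb (.Kb j)) ⊗ₜ[ℂ] (gen p pb (.K i) * gen p pb (.f j)) =
      (gen p pb (.Kb j) * gen p pb (.e i)) ⊗ₜ[ℂ] (gen p pb (.f j) * gen p pb (.K i)) := by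
  rw [K_mul_f, Kb_mul_e, TensorProduct.tmul_smul, TensorProduct.smul_tmul',
    inv_eq_of_mul_eq_one_right (hcomp i j)]

lemma comulGen_e_mul_f_sub_f_mul_e (hcomp : ∀ i j, p i j * pb j i = 1) (i j : Fin N) :
    comulGen p pb (.e i) * comulGen p pb (.f j) - comulGen p pb (.f j) * comulGen p pb (.e i) =
      if i = j then comulGen p pb (.K i) - comulGen p pb (.Kb i) else 0 := by
  have hef := e_mul_f_sub_f_mul_e p pb i j
  simp only [comulGen, mul_add, add_mul, Algebra.TensorProduct.tmul_mul_tmul, one_mul, mul_one,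
    e_mul_Kb_tmul_K_mul_f hcomp]
  split_ifs at hef ⊢ with hij
  · subst hij
    rw [sub_eq_iff_eq_add'.mp hef]
    simp only [TensorProduct.tmul_add, TensorProduct.add_tmul, TensorProduct.tmul_sub,
      TensorProduct.sub_tmul]
    abel
  · rw [sub_eq_zero.mp hef]
    abel

lemma comulGen_respects_rel (hcomp : ∀ i j, p i j * pb j i = 1) ⦃a b⦄
    (h : djRel N p pb a b) : FreeAlgebra.lift ℂ (comulGen p pb) a =
      FreeAlgebra.lift ℂ (comulGen p pb) b := by
  induction h with
  | KK i j => simp [comulGen, K_comm]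
  | KbKb i j => simp [comulGen, Kb_comm]
  | KKb i j => simp [comulGen, K_Kb_comm]
  | Ke i j => simp [comulGen, mul_add, add_mul, K_mul_e, K_comm, TensorProduct.smul_tmul']
  | Kbe i j =>
    simp only [map_mul, freeAlgebra_lift_g, comulGen, mul_add, add_mul, one_mul, mul_one,
      Algebra.TensorProduct.tmul_mul_tmul, Kb_mul_e, map_smul, smul_add,
      TensorProduct.tmul_smul, TensorProduct.smul_tmul']
    rw [K_Kb_comm]
  | Kf i j => simp [comulGen, mul_add, add_mul, K_mul_f, K_Kb_comm, TensorProduct.smul_tmul']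
  | Kbf i j => simp [comulGen, mul_add, add_mul, Kb_mul_f, Kb_comm, TensorProduct.smul_tmul']
  | ef i j =>
    simpa only [map_sub, map_mul, freeAlgebra_lift_g, apply_ite, map_zero] using
      comulGen_e_mul_f_sub_f_mul_e hcomp i j

def counitGen : DJGen N → ℂ
  | .K _ => 1
  | .Kb _ => 1
  | .e _ => 0
  | .f _ => 0

lemma isCounit_iff {ε : DJAlg N p pb →ₐ[ℂ] ℂ} :
    IsCounit p pb ε ↔ ∀ x, ε (gen p pb x) = counitGen x := by
  refine ⟨fun ⟨hK, hKb, he, hf⟩ x => ?_, fun h => ⟨fun i => h _, fun i => h _, fun i => h _,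
    fun i => h _⟩⟩
  cases x <;> simp only [counitGen, hK, hKb, he, hf]

lemma counitGen_respects_rel ⦃a b⦄ (h : djRel N p pb a b) :
    FreeAlgebra.lift ℂ counitGen a = FreeAlgebra.lift ℂ counitGen b := by
  induction h with
  | ef i j => split_ifs with hij <;> simp [counitGen, hij]
  | _ => simp [counitGen]

variable {Δ : DJAlg N p pb →ₐ[ℂ] DJAlg N p pb ⊗[ℂ] DJAlg N p pb} {ε : DJAlg N p pb →ₐ[ℂ] ℂ}

open Algebra.TensorProduct (assoc lid rid map one_def)

lemma comul_coassoc (hΔ : IsComul p pb Δ) (x : DJAlg N p pb) :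
    assoc ℂ ℂ ℂ (DJAlg N p pb) (DJAlg N p pb) (DJAlg N p pb) (map Δ (AlgHom.id ℂ _) (Δ x)) =
      map (AlgHom.id ℂ _) Δ (Δ x) := by
  rw [isComul_iff] at hΔ
  suffices ((assoc ℂ ℂ ℂ _ _ _).toAlgHom.comp ((map Δ (AlgHom.id ℂ _)).comp Δ)) =
      (map (AlgHom.id ℂ _) Δ).comp Δ from AlgHom.congr_fun this x
  refine algHom_ext fun x => ?_
  cases x <;> simp [hΔ, comulGen, one_def, TensorProduct.tmul_add, TensorProduct.add_tmul,
    add_assoc]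

lemma lid_counit_comul (hΔ : IsComul p pb Δ) (hε : IsCounit p pb ε) (x : DJAlg N p pb) :
    lid ℂ (DJAlg N p pb) (map ε (AlgHom.id ℂ _) (Δ x)) = x := by
  rw [isComul_iff] at hΔ
  rw [isCounit_iff] at hε
  suffices (lid ℂ _).toAlgHom.comp ((map ε (AlgHom.id ℂ _)).comp Δ) = AlgHom.id ℂ _ from
    AlgHom.congr_fun this x
  refine algHom_ext fun x => ?_
  cases x <;> simp [hΔ, hε, comulGen, counitGen]

lemma rid_counit_comul (hΔ : IsComul p pb Δ) (hε : IsCounit p pb ε) (x : DJAlg N p pb) :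
    rid ℂ ℂ (DJAlg N p pb) (map (AlgHom.id ℂ _) ε (Δ x)) = x := by
  rw [isComul_iff] at hΔ
  rw [isCounit_iff] at hε
  suffices (rid ℂ ℂ _).toAlgHom.comp ((map (AlgHom.id ℂ _) ε).comp Δ) = AlgHom.id ℂ _ from
    AlgHom.congr_fun this x
  refine algHom_ext fun x => ?_
  cases x <;> simp [hΔ, hε, comulGen, counitGen]

end DJAlg

theorem stmt13_general (N : ℕ) (p pb : Fin N → Fin N → ℂ)
    (hcomp : ∀ i j, p i j * pb j i = 1) :
    (∃! Δ : DJAlg N p pb →ₐ[ℂ] DJAlg N p pb ⊗[ℂ] DJAlg N p pb, IsComul p pb Δ) ∧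
    (∃! ε : DJAlg N p pb →ₐ[ℂ] ℂ, IsCounit p pb ε) ∧
    (∀ (Δ : DJAlg N p pb →ₐ[ℂ] DJAlg N p pb ⊗[ℂ] DJAlg N p pb)
        (ε : DJAlg N p pb →ₐ[ℂ] ℂ), IsComul p pb Δ → IsCounit p pb ε →
      (∀ x : DJAlg N p pb,
        Algebra.TensorProduct.assoc ℂ ℂ ℂ (DJAlg N p pb) (DJAlg N p pb) (DJAlg N p pb)
            (Algebra.TensorProduct.map Δ (AlgHom.id ℂ (DJAlg N p pb)) (Δ x)) =
          Algebra.TensorProduct.map (AlgHom.id ℂ (DJAlg N p pb)) Δ (Δ x)) ∧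
      (∀ x : DJAlg N p pb,
        Algebra.TensorProduct.lid ℂ (DJAlg N p pb)
            (Algebra.TensorProduct.map ε (AlgHom.id ℂ (DJAlg N p pb)) (Δ x)) = x) ∧
      (∀ x : DJAlg N p pb,
        Algebra.TensorProduct.rid ℂ ℂ (DJAlg N p pb)
            (Algebra.TensorProduct.map (AlgHom.id ℂ (DJAlg N p pb)) ε (Δ x)) = x)) := by
  refine ⟨?_, ?_, fun Δ ε hΔ hε => ⟨DJAlg.comul_coassoc hΔ, DJAlg.lid_counit_comul hΔ hε,
    DJAlg.rid_counit_comul hΔ hε⟩⟩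
  · simpa only [DJAlg.isComul_iff] using
      DJAlg.existsUnique_algHom_gen _ (DJAlg.comulGen_respects_rel hcomp)
  · simpa only [DJAlg.isCounit_iff] using
      DJAlg.existsUnique_algHom_gen _ DJAlg.counitGen_respects_rel

/-- For nonzero parameter systems `p, p̄` with `p_{ij} p̄_{ji} = 1`, the
generalized Drinfel'd–Jimbo algebra `A` carries a unique comultiplication `Δ` and a
unique counit `ε` taking the prescribed values on the generators, `Δ` is coassociative,
and `ε` satisfies the counit laws. -/
theorem stmt13 (N : ℕ) (hN : 1 ≤ N) (p pb : Fin N → Fin N → ℂ)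
    (hp : ∀ i j, p i j ≠ 0) (hpb : ∀ i j, pb i j ≠ 0)
    (hcomp : ∀ i j, p i j * pb j i = 1) :
    (∃! Δ : DJAlg N p pb →ₐ[ℂ] DJAlg N p pb ⊗[ℂ] DJAlg N p pb, IsComul p pb Δ) ∧
    (∃! ε : DJAlg N p pb →ₐ[ℂ] ℂ, IsCounit p pb ε) ∧
    (∀ (Δ : DJAlg N p pb →ₐ[ℂ] DJAlg N p pb ⊗[ℂ] DJAlg N p pb)
        (ε : DJAlg N p pb →ₐ[ℂ] ℂ), IsComul p pb Δ → IsCounit p pb ε →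
      (∀ x : DJAlg N p pb,
        Algebra.TensorProduct.assoc ℂ ℂ ℂ (DJAlg N p pb) (DJAlg N p pb) (DJAlg N p pb)
            (Algebra.TensorProduct.map Δ (AlgHom.id ℂ (DJAlg N p pb)) (Δ x)) =
          Algebra.TensorProduct.map (AlgHom.id ℂ (DJAlg N p pb)) Δ (Δ x)) ∧
      (∀ x : DJAlg N p pb,
        Algebra.TensorProduct.lid ℂ (DJAlg N p pb)
            (Algebra.TensorProduct.map ε (AlgHom.id ℂ (DJAlg N p pb)) (Δ x)) = x) ∧
      (∀ x : DJAlg N p pb,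
        Algebra.TensorProduct.rid ℂ ℂ (DJAlg N p pb)
            (Algebra.TensorProduct.map (AlgHom.id ℂ (DJAlg N p pb)) ε (Δ x)) = x)) :=
  stmt13_general N p pb hcomp

end
end
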